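/- Let ℓ : [0,∞) → (0,∞) be a continuous slowly varying function such that ∫₁^∞ dv/(v·ℓ(v)) < ∞. Then the function N(x) = ∫ₓ^∞ dv/(v·ℓ(v)) is slowly varying, and moreover ℓ(x)·N(x) → ∞ as x → ∞. -/

import Mathlib

/-!
Substituting `v = x t` gives `l(x) N(x) = ∫_{t > 1} x l(x) / (x t l(x t)) dt`. By slow variation
the integrand tends to `1/t` pointwise, so Fatou's lemma and `∫_1^∞ dt/t = ∞` force
`l(x) N(x) → ∞`. In other words `v · (v l(v))⁻¹ = 1/l(v)` is `o(N(v))`, and since `N` decreases,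
`N(x) - N(m x) = ∫_x^{m x} dv/(v l(v)) ≤ o(1) · N(x) log m`; hence `N(m x)/N(x) → 1` for `m ≥ 1`,
which is enough for slow variation.
-/

open Filter MeasureTheory Set intervalIntegral

def SlowlyVarying (l : ℝ → ℝ) : Prop :=
  ∀ lam : ℝ, 0 < lam → Tendsto (fun x => l (lam * x) / l x) atTop (nhds 1)

open Asymptotics Topology
open scoped ENNReal

theorem SlowlyVarying.of_one_le {g : ℝ → ℝ}
    (h : ∀ m, 1 ≤ m → Tendsto (fun x => g (m * x) / g x) atTop (𝓝 1)) : SlowlyVarying g := by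
  intro lam hlam
  rcases le_total 1 lam with hle | hle
  · exact h lam hle
  · have hinv := ((h lam⁻¹ ((one_le_inv₀ hlam).2 hle)).comp
      (tendsto_id.const_mul_atTop hlam)).inv₀ one_ne_zero
    rw [inv_one] at hinv
    refine hinv.congr fun x => ?_
    simp only [Function.comp_apply, id, inv_mul_cancel_left₀ hlam.ne', inv_div]

theorem MeasureTheory.lintegral_liminf_le_of_eventually_aemeasurable {α ι : Type*}
    [MeasurableSpace α] {μ : Measure α} {f : ι → α → ℝ≥0∞} {u : Filter ι}
    [IsCountablyGenerated u] (h : ∀ᶠ i in u, AEMeasurable (f i) μ) :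
    ∫⁻ a, liminf (fun i => f i a) u ∂μ ≤ liminf (fun i => ∫⁻ a, f i a ∂μ) u := by
  classical
  set f' : ι → α → ℝ≥0∞ := fun i => if AEMeasurable (f i) μ then f i else 0
  have hf' : ∀ᶠ i in u, f' i = f i := h.mono fun i hi => if_pos hi
  calc ∫⁻ a, liminf (fun i => f i a) u ∂μ = ∫⁻ a, liminf (fun i => f' i a) u ∂μ := by
        congr with a
        exact liminf_congr (hf'.mono fun i hi => congrFun hi.symm a)
    _ ≤ liminf (fun i => ∫⁻ a, f' i a ∂μ) u := lintegral_liminf_le' fun i => by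
        dsimp only [f']
        split_ifs with hi
        exacts [hi, aemeasurable_const]
    _ = liminf (fun i => ∫⁻ a, f i a ∂μ) u := liminf_congr (hf'.mono fun i hi => by rw [hi])

theorem Asymptotics.isLittleO_inv_of_tendsto_mul_atTop {α : Type*} {F : Filter α}
    {g h : α → ℝ} (hgh : Tendsto (fun x => g x * h x) F atTop) :
    (fun x => (g x)⁻¹) =o[F] h := by
  refine (isLittleO_iff_tendsto' ?_).2 ?_
  · filter_upwards [hgh.eventually_ne_atTop 0] with x hx hhx
    simp [hhx] at hx
  · simpa only [Function.comp_def, div_eq_mul_inv, mul_inv] using tendsto_inv_atTop_zero.comp hgh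

section TailIntegral

variable {f : ℝ → ℝ} {a : ℝ}

theorem integral_Ioi_sub_integral_Ioi (hf : IntegrableOn f (Ioi a)) {x y : ℝ} (hax : a ≤ x)
    (hxy : x ≤ y) : (∫ v in Ioi x, f v) - ∫ v in Ioi y, f v = ∫ v in Ioc x y, f v := by
  rw [← Ioc_union_Ioi_eq_Ioi hxy, setIntegral_union (Ioc_disjoint_Ioi le_rfl) measurableSet_Ioi
    (hf.mono_set (Ioc_subset_Ioi_self.trans (Ioi_subset_Ioi hax)))
    (hf.mono_set (Ioi_subset_Ioi (hax.trans hxy))), add_sub_cancel_right]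

theorem integral_Ioi_nonneg (hf0 : ∀ v ∈ Ioi a, 0 ≤ f v) {x : ℝ} (hax : a ≤ x) :
    0 ≤ ∫ v in Ioi x, f v :=
  setIntegral_nonneg measurableSet_Ioi fun v hv => hf0 v (lt_of_le_of_lt hax hv)

theorem antitoneOn_integral_Ioi (hf : IntegrableOn f (Ioi a)) (hf0 : ∀ v ∈ Ioi a, 0 ≤ f v) :
    AntitoneOn (fun x => ∫ v in Ioi x, f v) (Ici a) := by
  intro x hx y _ hxy
  dsimp only
  rw [← sub_nonneg, integral_Ioi_sub_integral_Ioi hf hx hxy]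
  exact setIntegral_nonneg measurableSet_Ioc fun v hv => hf0 v (lt_of_le_of_lt hx hv.1)

theorem integral_Ioi_sub_le_mul_log (hf : IntegrableOn f (Ioi a)) (hf0 : ∀ v ∈ Ioi a, 0 ≤ f v)
    {x y ε : ℝ} (hax : a ≤ x) (hx : 0 < x) (hxy : x ≤ y) (hε0 : 0 ≤ ε)
    (hε : ∀ v ∈ Ioc x y, v * f v ≤ ε * ∫ w in Ioi v, f w) :
    (∫ v in Ioi x, f v) - ∫ v in Ioi y, f v ≤ ε * (∫ v in Ioi x, f v) * Real.log (y / x) := by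
  set N : ℝ → ℝ := fun x => ∫ v in Ioi x, f v
  have hle : ∀ v ∈ Ioc x y, f v ≤ ε * N x * v⁻¹ := fun v hv => by
    have hNv : N v ≤ N x :=
      antitoneOn_integral_Ioi hf hf0 hax (hax.trans hv.1.le) hv.1.le
    rw [le_mul_inv_iff₀ (hx.trans hv.1)]
    calc f v * v = v * f v := mul_comm _ _
      _ ≤ ε * N v := hε v hv
      _ ≤ ε * N x := mul_le_mul_of_nonneg_left hNv hε0
  have hinv : IntegrableOn (fun v : ℝ => v⁻¹) (Ioc x y) :=
    (continuousOn_inv₀.mono fun v hv => (hx.trans_le hv.1).ne').integrableOn_Icc.mono_set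
      Ioc_subset_Icc_self
  calc N x - N y = ∫ v in Ioc x y, f v := integral_Ioi_sub_integral_Ioi hf hax hxy
    _ ≤ ∫ v in Ioc x y, ε * N x * v⁻¹ :=
      setIntegral_mono_on (hf.mono_set (Ioc_subset_Ioi_self.trans (Ioi_subset_Ioi hax)))
        (hinv.const_mul _) measurableSet_Ioc hle
    _ = ε * N x * Real.log (y / x) := by
      rw [MeasureTheory.integral_const_mul, ← intervalIntegral.integral_of_le hxy,
        integral_inv_of_pos hx (hx.trans_le hxy)]

theorem slowlyVarying_integral_Ioi_of_isLittleO (hf : IntegrableOn f (Ioi a))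
    (hf0 : ∀ v ∈ Ioi a, 0 ≤ f v) (hN : ∀ᶠ x in atTop, 0 < ∫ v in Ioi x, f v)
    (ho : (fun v => v * f v) =o[atTop] fun x => ∫ v in Ioi x, f v) :
    SlowlyVarying fun x => ∫ v in Ioi x, f v := by
  set N : ℝ → ℝ := fun x => ∫ v in Ioi x, f v
  refine SlowlyVarying.of_one_le fun m hm => ?_
  have hdiff : (fun x => N x - N (m * x)) =o[atTop] N := by
    refine IsLittleO.of_bound fun c hc => ?_
    have hlog : 0 ≤ Real.log m := Real.log_nonneg hm
    have hε : 0 < c / (Real.log m + 1) := by positivity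
    obtain ⟨X, hX⟩ := eventually_atTop.1 (ho.bound hε)
    filter_upwards [eventually_ge_atTop X, eventually_ge_atTop a, eventually_gt_atTop 0]
      with x hxX hax hx
    have hxm : x ≤ m * x := le_mul_of_one_le_left hx.le hm
    have hNx : 0 ≤ N x := integral_Ioi_nonneg hf0 hax
    have hsub := integral_Ioi_sub_le_mul_log hf hf0 hax hx hxm hε.le fun v hv => by
      have hbound := hX v (hxX.trans hv.1.le)
      rw [Real.norm_of_nonneg (integral_Ioi_nonneg hf0 (hax.trans hv.1.le))] at hbound
      exact (Real.le_norm_self _).trans hbound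
    rw [mul_div_cancel_right₀ _ hx.ne'] at hsub
    rw [Real.norm_of_nonneg hNx, Real.norm_of_nonneg (sub_nonneg.2
      (antitoneOn_integral_Ioi hf hf0 hax (hax.trans hxm) hxm))]
    calc N x - N (m * x) ≤ c / (Real.log m + 1) * N x * Real.log m := hsub
      _ ≤ c * N x := by
        rw [div_mul_eq_mul_div, div_mul_eq_mul_div, div_le_iff₀ (by positivity)]
        nlinarith [mul_nonneg hc.le hNx]
  have hratio := (tendsto_const_nhds (x := (1 : ℝ))).sub hdiff.tendsto_div_nhds_zero
  rw [sub_zero] at hratio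
  refine hratio.congr' (hN.mono fun x (hx : 0 < N x) => ?_)
  rw [sub_div, div_self hx.ne']
  ring

end TailIntegral

theorem SlowlyVarying.tendsto_rescaled_integrand {l : ℝ → ℝ} (hsv : SlowlyVarying l) {t : ℝ}
    (ht : 0 < t) :
    Tendsto (fun x => x * l x * (x * t * l (x * t))⁻¹) atTop (𝓝 t⁻¹) := by
  have h := ((hsv t ht).const_mul t).inv₀ (by simp [ht.ne'])
  rw [mul_one] at h
  refine h.congr' ((eventually_ne_atTop 0).mono fun x hx => ?_)
  dsimp only
  rw [mul_comm t x, mul_inv, inv_div]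
  field_simp

theorem tendsto_mul_integral_Ioi_inv_mul_atTop {l : ℝ → ℝ} (hpos : ∀ x ∈ Ioi (1 : ℝ), 0 < l x)
    (hsv : SlowlyVarying l) (hint : IntegrableOn (fun v => (v * l v)⁻¹) (Ioi 1)) :
    Tendsto (fun x => l x * ∫ v in Ioi x, (v * l v)⁻¹) atTop atTop := by
  set g : ℝ → ℝ → ℝ := fun x t => x * l x * (x * t * l (x * t))⁻¹
  have hg_int : ∀ x ∈ Ioi (1 : ℝ), IntegrableOn (g x) (Ioi 1) := fun x hx =>
    ((integrableOn_Ioi_comp_mul_left_iff (fun v => (v * l v)⁻¹) 1 (zero_lt_one.trans hx)).2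
      (hint.mono_set (Ioi_subset_Ioi (by simpa using le_of_lt hx)))).const_mul _
  have hg_nonneg : ∀ x ∈ Ioi (1 : ℝ), ∀ t ∈ Ioi (1 : ℝ), 0 ≤ g x t := fun x hx t ht => by
    have hxt : 1 < x * t := one_lt_mul_of_lt_of_le hx (le_of_lt ht)
    exact mul_nonneg (mul_pos (zero_lt_one.trans hx) (hpos x hx)).le
      (inv_pos.2 (mul_pos (zero_lt_one.trans hxt) (hpos _ hxt))).le
  have hg_integral : ∀ x ∈ Ioi (1 : ℝ),
      ∫⁻ t in Ioi 1, ENNReal.ofReal (g x t) =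
        ENNReal.ofReal (l x * ∫ v in Ioi x, (v * l v)⁻¹) := fun x hx => by
    have hx0 : (0 : ℝ) < x := zero_lt_one.trans hx
    rw [← ofReal_integral_eq_lintegral_ofReal (hg_int x hx)
      ((ae_restrict_mem measurableSet_Ioi).mono (hg_nonneg x hx)),
      MeasureTheory.integral_const_mul, integral_comp_mul_left_Ioi (fun v => (v * l v)⁻¹) 1 hx0,
      mul_one, smul_eq_mul]
    field_simp
  have hinv : ∫⁻ t in Ioi (1 : ℝ), ENNReal.ofReal t⁻¹ = ∞ := by
    by_contra h
    exact not_integrableOn_Ioi_inv ((lintegral_ofReal_ne_top_iff_integrable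
      (measurable_inv.aestronglyMeasurable)
      ((ae_restrict_mem measurableSet_Ioi).mono fun t (ht : 1 < t) => by positivity)).1 h)
  have hfatou := lintegral_liminf_le_of_eventually_aemeasurable
    (μ := volume.restrict (Ioi 1)) (f := fun x t => ENNReal.ofReal (g x t)) (u := atTop)
    ((eventually_gt_atTop 1).mono fun x hx => (hg_int x hx).aemeasurable.ennreal_ofReal)
  rw [setLIntegral_congr_fun measurableSet_Ioi fun t (ht : 1 < t) =>
      (ENNReal.tendsto_ofReal (hsv.tendsto_rescaled_integrand (zero_lt_one.trans ht))).liminf_eq,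
    hinv, liminf_congr ((eventually_gt_atTop 1).mono hg_integral)] at hfatou
  exact ENNReal.tendsto_ofReal_nhds_top.1 (tendsto_of_le_liminf_of_limsup_le hfatou le_top)

theorem slowlyVarying_tail_integral_general
    (l : ℝ → ℝ)
    (hpos : ∀ x ∈ Set.Ici (0 : ℝ), 0 < l x)
    (hsv : SlowlyVarying l)
    (hint : IntegrableOn (fun v => (v * l v)⁻¹) (Set.Ioi (1 : ℝ))) :
    SlowlyVarying (fun x => ∫ v in Set.Ioi x, (v * l v)⁻¹) ∧
      Tendsto (fun x => l x * ∫ v in Set.Ioi x, (v * l v)⁻¹) atTop atTop := by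
  have hpos₁ : ∀ x ∈ Ioi (1 : ℝ), 0 < l x := fun x hx =>
    hpos x (mem_Ici.2 (zero_le_one.trans (le_of_lt hx)))
  have hlN := tendsto_mul_integral_Ioi_inv_mul_atTop hpos₁ hsv hint
  have hN : ∀ᶠ x in atTop, 0 < ∫ v in Ioi x, (v * l v)⁻¹ := by
    filter_upwards [hlN.eventually_gt_atTop 0, eventually_gt_atTop 1] with x hlNx hx
    exact pos_of_mul_pos_right hlNx (hpos₁ x hx).le
  have ho : (fun v => v * (v * l v)⁻¹) =o[atTop] fun x => ∫ v in Ioi x, (v * l v)⁻¹ :=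
    (isLittleO_inv_of_tendsto_mul_atTop hlN).congr'
      ((eventually_ne_atTop 0).mono fun v hv => by field_simp) EventuallyEq.rfl
  refine ⟨slowlyVarying_integral_Ioi_of_isLittleO hint (fun v hv => ?_) hN ho, hlN⟩
  exact (inv_pos.2 (mul_pos (zero_lt_one.trans hv) (hpos₁ v hv))).le

/-- If `l` is a continuous slowly varying function, positive on `[0,∞)`, with
`∫₁^∞ dv/(v·l(v)) < ∞`, then `N(x) = ∫ₓ^∞ dv/(v·l(v))` is slowly varying
and `l(x)·N(x) → ∞` as `x → ∞`. -/
theorem slowlyVarying_tail_integral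
    (l : ℝ → ℝ) (hcont : ContinuousOn l (Set.Ici 0))
    (hpos : ∀ x ∈ Set.Ici (0 : ℝ), 0 < l x)
    (hsv : SlowlyVarying l)
    (hint : IntegrableOn (fun v => (v * l v)⁻¹) (Set.Ioi (1 : ℝ))) :
    SlowlyVarying (fun x => ∫ v in Set.Ioi x, (v * l v)⁻¹) ∧
      Tendsto (fun x => l x * ∫ v in Set.Ioi x, (v * l v)⁻¹) atTop atTop :=
  slowlyVarying_tail_integral_general l hpos hsv hint
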